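/- Let H be a complex Hilbert space and Y : H → H a bounded linear operator. Let T be the off-diagonal operator matrix on H ⊕ H given by T(x₁, x₂) = (Y x₂, Y x₁). Then w(T) = w(Y). -/

import Mathlib

/-!
For `z = (a, b)` the quadratic form of `T` is `⟪Y b, a⟫ + ⟪Y a, b⟫`, which is half of
`⟪Y (a + b), a + b⟫ - ⟪Y (a - b), a - b⟫`; by the parallelogram law it is therefore bounded by
`w(Y) (‖a‖² + ‖b‖²) = w(Y) ‖z‖²`. Conversely, `z = (x, x)` gives `⟪T z, z⟫ = 2 ⟪Y x, x⟫` with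
`‖z‖² = 2 ‖x‖²`.
-/

noncomputable def numRadius {H : Type*} [NormedAddCommGroup H] [InnerProductSpace ℂ H]
    (T : H →L[ℂ] H) : ℝ :=
  sSup {r : ℝ | ∃ x : H, ‖x‖ = 1 ∧ r = ‖(inner ℂ (T x) x : ℂ)‖}

open scoped InnerProductSpace

theorem inner_map_add_add_sub_inner_map_sub_sub {𝕜 E F : Type*} [RCLike 𝕜]
    [NormedAddCommGroup E] [InnerProductSpace 𝕜 E] [FunLike F E E] [LinearMapClass F 𝕜 E E]
    (Y : F) (a b : E) :
    ⟪Y (a + b), a + b⟫_𝕜 - ⟪Y (a - b), a - b⟫_𝕜 = 2 * (⟪Y b, a⟫_𝕜 + ⟪Y a, b⟫_𝕜) := by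
  simp only [map_add, map_sub, inner_add_left, inner_add_right, inner_sub_left, inner_sub_right]
  ring

section NumRadius

variable {H : Type*} [NormedAddCommGroup H] [InnerProductSpace ℂ H] (T : H →L[ℂ] H)

theorem numRadius_nonneg : 0 ≤ numRadius T :=
  Real.sSup_nonneg (by rintro r ⟨x, -, rfl⟩; positivity)

theorem numRadius_le {c : ℝ} (hc : 0 ≤ c) (h : ∀ x, ‖x‖ = 1 → ‖⟪T x, x⟫_ℂ‖ ≤ c) :
    numRadius T ≤ c :=
  Real.sSup_le (by rintro r ⟨x, hx, rfl⟩; exact h x hx) hc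

theorem norm_inner_le_numRadius {x : H} (hx : ‖x‖ = 1) : ‖⟪T x, x⟫_ℂ‖ ≤ numRadius T := by
  refine le_csSup ⟨‖T‖, ?_⟩ ⟨x, hx, rfl⟩
  rintro r ⟨y, hy, rfl⟩
  exact (norm_inner_le_norm _ _).trans (by simpa [hy] using T.le_opNorm y)

theorem norm_inner_le_numRadius_mul_sq (x : H) : ‖⟪T x, x⟫_ℂ‖ ≤ numRadius T * ‖x‖ ^ 2 := by
  rcases eq_or_ne x 0 with rfl | hx
  · simp
  have hx' : ‖x‖ ≠ 0 := norm_ne_zero_iff.mpr hx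
  have hunit : ‖(‖x‖⁻¹ : ℂ) • x‖ = 1 := by simp [norm_smul, hx']
  have h := norm_inner_le_numRadius T hunit
  rw [map_smul, inner_smul_left, inner_smul_right, norm_mul, norm_mul] at h
  simp only [map_inv₀, Complex.conj_ofReal, norm_inv, Complex.norm_real, norm_norm] at h
  field_simp at h
  rwa [mul_comm] at h

theorem norm_inner_add_inner_le_numRadius (a b : H) :
    ‖⟪T b, a⟫_ℂ + ⟪T a, b⟫_ℂ‖ ≤ numRadius T * (‖a‖ ^ 2 + ‖b‖ ^ 2) := by
  have hpar : ‖a + b‖ ^ 2 + ‖a - b‖ ^ 2 = 2 * (‖a‖ ^ 2 + ‖b‖ ^ 2) := by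
    simpa [sq] using parallelogram_law_with_norm ℂ a b
  have key : 2 * ‖⟪T b, a⟫_ℂ + ⟪T a, b⟫_ℂ‖ ≤ 2 * (numRadius T * (‖a‖ ^ 2 + ‖b‖ ^ 2)) :=
    calc 2 * ‖⟪T b, a⟫_ℂ + ⟪T a, b⟫_ℂ‖
        = ‖⟪T (a + b), a + b⟫_ℂ - ⟪T (a - b), a - b⟫_ℂ‖ := by
          rw [inner_map_add_add_sub_inner_map_sub_sub, norm_mul, Complex.norm_two]
      _ ≤ ‖⟪T (a + b), a + b⟫_ℂ‖ + ‖⟪T (a - b), a - b⟫_ℂ‖ := norm_sub_le _ _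
      _ ≤ numRadius T * ‖a + b‖ ^ 2 + numRadius T * ‖a - b‖ ^ 2 :=
          add_le_add (norm_inner_le_numRadius_mul_sq T _) (norm_inner_le_numRadius_mul_sq T _)
      _ = 2 * (numRadius T * (‖a‖ ^ 2 + ‖b‖ ^ 2)) := by rw [← mul_add, hpar]; ring
  linarith

end NumRadius

theorem offdiag_operator_matrix_numRadius_same
    {H : Type*} [NormedAddCommGroup H] [InnerProductSpace ℂ H]
    (Y : H →L[ℂ] H)
    (T : WithLp 2 (H × H) →L[ℂ] WithLp 2 (H × H))
    (hT : ∀ x : WithLp 2 (H × H),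
      WithLp.equiv 2 (H × H) (T x) =
        (Y (WithLp.equiv 2 (H × H) x).2, Y (WithLp.equiv 2 (H × H) x).1)) :
    numRadius T = numRadius Y := by
  have hquad (z : WithLp 2 (H × H)) : ⟪T z, z⟫_ℂ = ⟪Y z.snd, z.fst⟫_ℂ + ⟪Y z.fst, z.snd⟫_ℂ := by
    have hfst : (T z).fst = Y z.snd := congrArg Prod.fst (hT z)
    have hsnd : (T z).snd = Y z.fst := congrArg Prod.snd (hT z)
    rw [WithLp.prod_inner_apply, WithLp.ofLp_fst, WithLp.ofLp_snd, WithLp.ofLp_fst,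
      WithLp.ofLp_snd, hfst, hsnd]
  apply le_antisymm
  · refine numRadius_le T (numRadius_nonneg Y) fun z hz => ?_
    have h := norm_inner_add_inner_le_numRadius Y z.fst z.snd
    rwa [← WithLp.prod_norm_sq_eq_of_L2, hz, one_pow, mul_one, ← hquad] at h
  · refine numRadius_le Y (numRadius_nonneg T) fun x hx => ?_
    have h := norm_inner_le_numRadius_mul_sq T (WithLp.toLp 2 (x, x))
    rw [hquad, WithLp.prod_norm_sq_eq_of_L2] at h
    simp only [WithLp.toLp_fst, WithLp.toLp_snd, hx, one_pow, ← two_mul, norm_mul,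
      Complex.norm_two] at h
    linarith
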